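/- Let β₀ < 1/2 and suppose for each β ≤ β₀ and h ∈ ℝ, q = q(β,h) ∈ [0,1) is the unique solution of q = E[tanh²(βz√q + h)] with z standard Gaussian, and q₋ is the unique solution of the same equation with β replaced by β₋ = √((N−1)/N)·β. Then there is a universal constant L such that |q − q₋| ≤ L/N for all N ≥ 1, β < 1/2, and h. -/

import Mathlib

open MeasureTheory ProbabilityTheory Real
open scoped ENNReal NNReal

section FPS_aux

lemma FPS.integrable_sq_exp :
    Integrable (fun x : ℝ => x ^ 2 * Real.exp (-(2⁻¹:ℝ) * x ^ 2)) := by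
  have h := integrable_rpow_mul_exp_neg_mul_sq (b := (2⁻¹:ℝ)) (by norm_num) (s := 2) (by norm_num)
  convert h using 2 with x
  rw [show ((2:ℝ) = ((2:ℕ):ℝ)) by norm_num, Real.rpow_natCast]

lemma FPS.integrable_id_exp :
    Integrable (fun x : ℝ => x * Real.exp (-(2⁻¹:ℝ) * x ^ 2)) := by
  have h := integrable_rpow_mul_exp_neg_mul_sq (b := (2⁻¹:ℝ)) (by norm_num) (s := 1) (by norm_num)
  convert h using 2 with x
  rw [Real.rpow_one]

lemma FPS.integral_sq_exp_eq :
    ∫ x : ℝ, x ^ 2 * Real.exp (-(2⁻¹:ℝ) * x ^ 2) = Real.sqrt (2 * π) := by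
  have hu : ∀ x : ℝ, HasDerivAt (fun y : ℝ => y) 1 x := fun x => hasDerivAt_id x
  have hv : ∀ x : ℝ, HasDerivAt (fun y : ℝ => -Real.exp (-(2⁻¹:ℝ) * y ^ 2))
      (x * Real.exp (-(2⁻¹:ℝ) * x ^ 2)) x := by
    intro x
    have h1 : HasDerivAt (fun y : ℝ => -(2⁻¹:ℝ) * y ^ 2) (-(2⁻¹:ℝ) * (2 * x)) x := by
      simpa using ((hasDerivAt_pow 2 x).const_mul (-(2⁻¹:ℝ)))
    have h2 := (h1.exp).neg
    exact h2.congr_deriv (by ring)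
  have huv' : Integrable (fun x : ℝ => x * (x * Real.exp (-(2⁻¹:ℝ) * x ^ 2))) := by
    have h' : (fun x : ℝ => x * (x * Real.exp (-(2⁻¹:ℝ) * x ^ 2)))
        = fun x : ℝ => x ^ 2 * Real.exp (-(2⁻¹:ℝ) * x ^ 2) := funext fun x => by ring
    rw [h']; exact FPS.integrable_sq_exp
  have hu'v : Integrable (fun x : ℝ => (1:ℝ) * -Real.exp (-(2⁻¹:ℝ) * x ^ 2)) := by
    have h' : (fun x : ℝ => (1:ℝ) * -Real.exp (-(2⁻¹:ℝ) * x ^ 2))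
        = fun x : ℝ => -Real.exp (-(2⁻¹:ℝ) * x ^ 2) := funext fun x => by ring
    rw [h']; exact (integrable_exp_neg_mul_sq (by norm_num)).neg
  have huv : Integrable (fun x : ℝ => x * -Real.exp (-(2⁻¹:ℝ) * x ^ 2)) := by
    have h' : (fun x : ℝ => x * -Real.exp (-(2⁻¹:ℝ) * x ^ 2))
        = fun x : ℝ => -(x * Real.exp (-(2⁻¹:ℝ) * x ^ 2)) := funext fun x => by ring
    rw [h']; exact FPS.integrable_id_exp.neg
  have key := integral_mul_deriv_eq_deriv_mul_of_integrable (fun x _ => hu x) (fun x _ => hv x) huv' hu'v huv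
  rw [show (∫ x : ℝ, x * (x * Real.exp (-(2⁻¹:ℝ) * x ^ 2))) =
      ∫ x : ℝ, x ^ 2 * Real.exp (-(2⁻¹:ℝ) * x ^ 2) by congr 1; funext x; ring] at key
  rw [key]
  have h2 : (∫ x : ℝ, (1:ℝ) * -Real.exp (-(2⁻¹:ℝ) * x ^ 2))
      = -∫ x : ℝ, Real.exp (-(2⁻¹:ℝ) * x ^ 2) := by simp [integral_neg]
  rw [h2, neg_neg, integral_gaussian]
  congr 1
  ring

lemma FPS.gauss_eq : gaussianReal 0 1 = (volume : Measure ℝ).withDensity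
    (fun x => ((gaussianPDFReal 0 1 x).toNNReal : ℝ≥0∞)) := by
  rw [gaussianReal_of_var_ne_zero 0 one_ne_zero]
  rfl

lemma FPS.pdf_eq (x : ℝ) : gaussianPDFReal 0 1 x
    = (Real.sqrt (2 * π))⁻¹ * Real.exp (-(2⁻¹:ℝ) * x ^ 2) := by
  simp only [gaussianPDFReal, NNReal.coe_one, mul_one, sub_zero]
  congr 1
  ring_nf

lemma FPS.integral_gauss_eq (g : ℝ → ℝ) :
    ∫ x, g x ∂(gaussianReal 0 1) = ∫ x, gaussianPDFReal 0 1 x * g x := by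
  rw [FPS.gauss_eq, integral_withDensity_eq_integral_smul
    ((measurable_gaussianPDFReal 0 1).real_toNNReal) g]
  congr 1
  funext x
  rw [NNReal.smul_def, Real.coe_toNNReal _ (gaussianPDFReal_nonneg 0 1 x), smul_eq_mul]

lemma FPS.integrable_gauss_iff (g : ℝ → ℝ) :
    Integrable g (gaussianReal 0 1) ↔ Integrable (fun x => gaussianPDFReal 0 1 x * g x) := by
  rw [FPS.gauss_eq,
    integrable_withDensity_iff_integrable_smul ((measurable_gaussianPDFReal 0 1).real_toNNReal)]
  constructor <;> intro h <;>
  · convert h using 1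
    · rfl
    funext x
    rw [NNReal.smul_def, Real.coe_toNNReal _ (gaussianPDFReal_nonneg 0 1 x), smul_eq_mul]

lemma FPS.integrable_sq_gauss : Integrable (fun x : ℝ => x ^ 2) (gaussianReal 0 1) := by
  rw [FPS.integrable_gauss_iff]
  have h : (fun x : ℝ => gaussianPDFReal 0 1 x * x ^ 2)
      = fun x : ℝ => (Real.sqrt (2 * π))⁻¹ * (x ^ 2 * Real.exp (-(2⁻¹:ℝ) * x ^ 2)) := by
    funext x; rw [FPS.pdf_eq]; ring
  rw [h]
  exact FPS.integrable_sq_exp.const_mul _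

lemma FPS.integral_sq_gauss : ∫ x, x ^ 2 ∂(gaussianReal 0 1) = 1 := by
  rw [FPS.integral_gauss_eq]
  have h : (fun x : ℝ => gaussianPDFReal 0 1 x * x ^ 2)
      = fun x : ℝ => (Real.sqrt (2 * π))⁻¹ * (x ^ 2 * Real.exp (-(2⁻¹:ℝ) * x ^ 2)) := by
    funext x; rw [FPS.pdf_eq]; ring
  rw [h, integral_const_mul, FPS.integral_sq_exp_eq, inv_mul_cancel₀]
  positivity

lemma FPS.tanh_hasDerivAt (x : ℝ) : HasDerivAt Real.tanh (1 / Real.cosh x ^ 2) x := by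
  have h := (Real.hasDerivAt_sinh x).div (Real.hasDerivAt_cosh x) (Real.cosh_pos x).ne'
  have he : (fun y => Real.sinh y / Real.cosh y) = Real.tanh :=
    funext fun y => (Real.tanh_eq_sinh_div_cosh y).symm
  rw [show Real.sinh / Real.cosh = Real.tanh from he] at h
  refine h.congr_deriv ?_
  rw [show Real.cosh x * Real.cosh x - Real.sinh x * Real.sinh x
    = Real.cosh x ^ 2 - Real.sinh x ^ 2 by ring, Real.cosh_sq_sub_sinh_sq]

lemma FPS.tanh_lip (x y : ℝ) : |Real.tanh x - Real.tanh y| ≤ |x - y| := by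
  have h := convex_univ.norm_image_sub_le_of_norm_hasDerivWithin_le
    (f := Real.tanh) (f' := fun z => 1 / Real.cosh z ^ 2) (C := 1) (s := Set.univ)
    (fun z _ => (FPS.tanh_hasDerivAt z).hasDerivWithinAt) ?_ (Set.mem_univ y) (Set.mem_univ x)
  · simpa [Real.norm_eq_abs] using h
  · intro z _
    rw [Real.norm_eq_abs, abs_of_nonneg (by positivity), div_le_one (by positivity)]
    nlinarith [Real.one_le_cosh z]

lemma FPS.abs_tanh_le_one (x : ℝ) : |Real.tanh x| ≤ 1 := by
  rw [Real.tanh_eq_sinh_div_cosh, abs_div, abs_of_pos (Real.cosh_pos x),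
    div_le_one (Real.cosh_pos x)]
  nlinarith [Real.cosh_sq_sub_sinh_sq x, sq_abs (Real.sinh x), Real.cosh_pos x,
    abs_nonneg (Real.sinh x)]

lemma FPS.abs_tanh_le_abs (x : ℝ) : |Real.tanh x| ≤ |x| := by
  have h := FPS.tanh_lip x 0
  simpa [Real.tanh_zero] using h

lemma FPS.tanh_sq_le_sq (x : ℝ) : Real.tanh x ^ 2 ≤ x ^ 2 := by
  have h := FPS.abs_tanh_le_abs x
  nlinarith [abs_nonneg (Real.tanh x), sq_abs (Real.tanh x), sq_abs x, abs_nonneg x]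

lemma FPS.continuous_tanh : Continuous Real.tanh := by
  have he : (fun y => Real.sinh y / Real.cosh y) = Real.tanh :=
    funext fun y => (Real.tanh_eq_sinh_div_cosh y).symm
  rw [← he]
  exact Real.continuous_sinh.div Real.continuous_cosh fun x => (Real.cosh_pos x).ne'

lemma FPS.integrable_tanh_sq (c h : ℝ) :
    Integrable (fun x => Real.tanh (c * x + h) ^ 2) (gaussianReal 0 1) := by
  have hc : Continuous fun x : ℝ => Real.tanh (c * x + h) ^ 2 :=
    (FPS.continuous_tanh.comp (by continuity)).pow 2
  refine Integrable.mono' (integrable_const (1:ℝ)) hc.aestronglyMeasurable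
    (ae_of_all _ fun x => ?_)
  rw [Real.norm_eq_abs, abs_pow, sq_abs]
  nlinarith [FPS.abs_tanh_le_one (c * x + h), abs_nonneg (Real.tanh (c * x + h)),
    sq_abs (Real.tanh (c * x + h))]

lemma FPS.amgm {e : ℝ} (he : 0 < e) (x t : ℝ) :
    |x| * |t| ≤ e / 2 * x ^ 2 + t ^ 2 / (2 * e) := by
  rw [← mul_le_mul_iff_right₀ (show (0:ℝ) < 2 * e by positivity)]
  have h : 2 * e * (e / 2 * x ^ 2 + t ^ 2 / (2 * e)) = e ^ 2 * x ^ 2 + t ^ 2 := by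
    field_simp
  rw [h]
  nlinarith [sq_nonneg (e * |x| - |t|), sq_abs x, sq_abs t]

end FPS_aux

set_option maxHeartbeats 2000000 in
theorem fixed_point_stability :
    ∃ L : ℝ, 0 < L ∧
      ∀ (N : ℕ), 1 ≤ N → ∀ (β h q qm : ℝ), 0 ≤ β → β < 1 / 2 →
        0 ≤ q → q < 1 → 0 ≤ qm → qm < 1 →
        q = ∫ x, Real.tanh (β * x * Real.sqrt q + h) ^ 2 ∂(gaussianReal 0 1) →
        qm = ∫ x, Real.tanh (Real.sqrt ((N - 1 : ℝ) / N) * β * x * Real.sqrt qm + h) ^ 2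
            ∂(gaussianReal 0 1) →
        |q - qm| ≤ L / N := by
  refine ⟨2, by norm_num, ?_⟩
  intro N hN β h q qm hβ0 hβ hq0 hq1 hqm0 hqm1 hq hqm
  have hNpos : (0:ℝ) < N := by exact_mod_cast Nat.pos_of_ne_zero (by omega)
  have hN1 : (1:ℝ) ≤ N := by exact_mod_cast hN
  set r : ℝ := ((N:ℝ) - 1) / N with hr_def
  have hr0 : 0 ≤ r := div_nonneg (by linarith) hNpos.le
  have hr1 : r ≤ 1 := by rw [hr_def, div_le_one hNpos]; linarith
  set s : ℝ := Real.sqrt r with hs_def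
  have hs0 : 0 ≤ s := Real.sqrt_nonneg r
  have hs1 : s ≤ 1 := by
    rw [hs_def, show (1:ℝ) = Real.sqrt 1 by rw [Real.sqrt_one]]
    exact Real.sqrt_le_sqrt hr1
  have hrs : r ≤ s := (Real.le_sqrt hr0 hr0).mpr (by nlinarith)
  set β' : ℝ := s * β with hβ'_def
  have hβ'0 : 0 ≤ β' := mul_nonneg hs0 hβ0
  have hβ'β : β' ≤ β := by nlinarith
  have h1r : 1 - r = 1 / N := by rw [hr_def]; field_simp; ring
  have hΔ : β - β' ≤ 1 / (2 * N) := by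
    have : β - β' = β * (1 - s) := by rw [hβ'_def]; ring
    rw [this]
    have h1 : 1 - s ≤ 1 / N := by linarith [hrs, h1r]
    have h2 : (0:ℝ) ≤ 1 - s := by linarith
    have h3 : β * (1 - s) ≤ (1/2) * (1/N) := by
      apply mul_le_mul hβ.le h1 h2 (by norm_num)
    calc β * (1 - s) ≤ (1/2) * (1/N) := h3
      _ = 1 / (2 * N) := by ring
  have hΔ0 : 0 ≤ β - β' := by linarith
  set G := gaussianReal 0 1 with hG_def
  set ε : ℝ := Real.sqrt q with he_def
  set δ : ℝ := Real.sqrt qm with hd_def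
  have hε0 : 0 ≤ ε := Real.sqrt_nonneg q
  have hδ0 : 0 ≤ δ := Real.sqrt_nonneg qm
  have hε1 : ε ≤ 1 := by
    rw [he_def, show (1:ℝ) = Real.sqrt 1 by rw [Real.sqrt_one]]
    exact Real.sqrt_le_sqrt hq1.le
  have hδ1 : δ ≤ 1 := by
    rw [hd_def, show (1:ℝ) = Real.sqrt 1 by rw [Real.sqrt_one]]
    exact Real.sqrt_le_sqrt hqm1.le
  have hε2 : ε ^ 2 = q := Real.sq_sqrt hq0
  have hδ2 : δ ^ 2 = qm := Real.sq_sqrt hqm0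
  -- rewrite the fixed point equations
  have hq' : q = ∫ x, Real.tanh ((β * ε) * x + h) ^ 2 ∂G := by
    rw [hq]; congr 1; funext x; ring_nf
  have hqm' : qm = ∫ x, Real.tanh ((β' * δ) * x + h) ^ 2 ∂G := by
    rw [hqm]; congr 1; funext x; ring_nf
  have iTa := FPS.integrable_tanh_sq (β * ε) h
  have iTb := FPS.integrable_tanh_sq (β' * δ) h
  have ix2 := FPS.integrable_sq_gauss
  by_cases hqz : q = 0
  · -- q = 0 forces h = 0 and then qm = 0
    have hε0' : ε = 0 := by rw [he_def, hqz, Real.sqrt_zero]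
    have h0 : (0:ℝ) = Real.tanh h ^ 2 := by
      have hthis := hq'
      rw [hqz, hε0'] at hthis
      simp only [mul_zero, zero_mul, zero_add] at hthis
      rwa [integral_const, probReal_univ, one_smul] at hthis
    have ht : Real.tanh h = 0 := (pow_eq_zero_iff two_ne_zero).mp h0.symm
    have hh : h = 0 := by
      rw [Real.tanh_eq_sinh_div_cosh, div_eq_zero_iff] at ht
      rcases ht with ht | ht
      · exact Real.sinh_eq_zero.mp ht
      · exact absurd ht (Real.cosh_pos h).ne'
    have hb : qm ≤ (β' * δ) ^ 2 := by
      rw [hqm']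
      calc ∫ x, Real.tanh ((β' * δ) * x + h) ^ 2 ∂G ≤ ∫ x, (β' * δ) ^ 2 * x ^ 2 ∂G := by
            apply integral_mono iTb (ix2.const_mul _)
            intro x
            simp only [hh, add_zero]
            simpa [mul_pow] using FPS.tanh_sq_le_sq ((β' * δ) * x)
        _ = (β' * δ) ^ 2 := by rw [integral_const_mul, FPS.integral_sq_gauss, mul_one]
    have hb' : (β' * δ) ^ 2 = β' ^ 2 * qm := by rw [mul_pow, hδ2]
    have hb2 : β' ^ 2 ≤ 1 / 4 := by nlinarith
    have hb3 : β' ^ 2 * qm ≤ (1/4) * qm := mul_le_mul_of_nonneg_right hb2 hqm0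
    have hqmz : qm = 0 := le_antisymm (by linarith) hqm0
    rw [hqz, hqmz]
    simp only [sub_zero, abs_zero]
    positivity
  · by_cases hqmz : qm = 0
    · -- qm = 0 forces h = 0 and then q = 0, contradiction
      exfalso
      have hδ0' : δ = 0 := by rw [hd_def, hqmz, Real.sqrt_zero]
      have h0 : (0:ℝ) = Real.tanh h ^ 2 := by
        have hthis := hqm'
        rw [hqmz, hδ0'] at hthis
        simp only [mul_zero, zero_mul, zero_add] at hthis
        rwa [integral_const, probReal_univ, one_smul] at hthis
      have ht : Real.tanh h = 0 := (pow_eq_zero_iff two_ne_zero).mp h0.symm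
      have hh : h = 0 := by
        rw [Real.tanh_eq_sinh_div_cosh, div_eq_zero_iff] at ht
        rcases ht with ht | ht
        · exact Real.sinh_eq_zero.mp ht
        · exact absurd ht (Real.cosh_pos h).ne'
      have hb : q ≤ (β * ε) ^ 2 := by
        rw [hq']
        calc ∫ x, Real.tanh ((β * ε) * x + h) ^ 2 ∂G ≤ ∫ x, (β * ε) ^ 2 * x ^ 2 ∂G := by
              apply integral_mono iTa (ix2.const_mul _)
              intro x
              simp only [hh, add_zero]
              simpa [mul_pow] using FPS.tanh_sq_le_sq ((β * ε) * x)
          _ = (β * ε) ^ 2 := by rw [integral_const_mul, FPS.integral_sq_gauss, mul_one]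
      have hb' : (β * ε) ^ 2 = β ^ 2 * q := by rw [mul_pow, hε2]
      have hb2 : β ^ 2 ≤ 1 / 4 := by
        rw [sq]
        calc β * β ≤ (1/2) * (1/2) := mul_le_mul hβ.le hβ.le hβ0 (by norm_num)
          _ = 1/4 := by norm_num
      have hb3 : β ^ 2 * q ≤ (1/4) * q := mul_le_mul_of_nonneg_right hb2 hq0
      exact hqz (le_antisymm (by linarith) hq0)
    · -- main case : q > 0 and qm > 0
      have hqp : 0 < q := lt_of_le_of_ne hq0 (Ne.symm hqz)
      have hqmp : 0 < qm := lt_of_le_of_ne hqm0 (Ne.symm hqmz)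
      have hεp : 0 < ε := Real.sqrt_pos.mpr hqp
      have hδp : 0 < δ := Real.sqrt_pos.mpr hqmp
      set c : ℝ := |β * ε - β' * δ| with hc_def
      have hc0 : 0 ≤ c := abs_nonneg _
      have hpt : ∀ x : ℝ, |Real.tanh ((β * ε) * x + h) ^ 2 - Real.tanh ((β' * δ) * x + h) ^ 2|
          ≤ (c * ε / 2 + c * δ / 2) * x ^ 2
            + (c / (2 * ε)) * Real.tanh ((β * ε) * x + h) ^ 2
            + (c / (2 * δ)) * Real.tanh ((β' * δ) * x + h) ^ 2 := by
        intro x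
        set Ta := Real.tanh ((β * ε) * x + h) with hTa
        set Tb := Real.tanh ((β' * δ) * x + h) with hTb
        have h1 : |Ta - Tb| ≤ c * |x| := by
          calc |Ta - Tb| ≤ |((β * ε) * x + h) - ((β' * δ) * x + h)| :=
                FPS.tanh_lip ((β * ε) * x + h) ((β' * δ) * x + h)
            _ = |(β * ε - β' * δ) * x| := by congr 1; ring
            _ = c * |x| := by rw [abs_mul, hc_def]
        have h3 : |Ta ^ 2 - Tb ^ 2| ≤ (c * |x|) * (|Ta| + |Tb|) := by
          calc |Ta ^ 2 - Tb ^ 2| = |Ta - Tb| * |Ta + Tb| := by rw [← abs_mul]; congr 1; ring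
            _ ≤ (c * |x|) * (|Ta| + |Tb|) :=
                mul_le_mul h1 (abs_add_le _ _) (abs_nonneg _) (by positivity)
        have h4 : |x| * |Ta| ≤ ε / 2 * x ^ 2 + Ta ^ 2 / (2 * ε) := FPS.amgm hεp x Ta
        have h5 : |x| * |Tb| ≤ δ / 2 * x ^ 2 + Tb ^ 2 / (2 * δ) := FPS.amgm hδp x Tb
        calc |Ta ^ 2 - Tb ^ 2| ≤ (c * |x|) * (|Ta| + |Tb|) := h3
          _ = c * (|x| * |Ta|) + c * (|x| * |Tb|) := by ring
          _ ≤ c * (ε / 2 * x ^ 2 + Ta ^ 2 / (2 * ε)) + c * (δ / 2 * x ^ 2 + Tb ^ 2 / (2 * δ)) :=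
              add_le_add (mul_le_mul_of_nonneg_left h4 hc0) (mul_le_mul_of_nonneg_left h5 hc0)
          _ = (c * ε / 2 + c * δ / 2) * x ^ 2 + (c / (2 * ε)) * Ta ^ 2
              + (c / (2 * δ)) * Tb ^ 2 := by ring
      have ig : Integrable (fun x => (c * ε / 2 + c * δ / 2) * x ^ 2
          + (c / (2 * ε)) * Real.tanh ((β * ε) * x + h) ^ 2
          + (c / (2 * δ)) * Real.tanh ((β' * δ) * x + h) ^ 2) G :=
        ((ix2.const_mul _).add (iTa.const_mul _)).add (iTb.const_mul _)
      have hsub := integral_sub iTa iTb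
      rw [← hq', ← hqm'] at hsub
      have habs : |q - qm| ≤ ∫ x, ((c * ε / 2 + c * δ / 2) * x ^ 2
          + (c / (2 * ε)) * Real.tanh ((β * ε) * x + h) ^ 2
          + (c / (2 * δ)) * Real.tanh ((β' * δ) * x + h) ^ 2) ∂G := by
        rw [← hsub, ← Real.norm_eq_abs]
        exact norm_integral_le_of_norm_le ig
          (ae_of_all _ fun x => by rw [Real.norm_eq_abs]; exact hpt x)
      have hint : ∫ x, ((c * ε / 2 + c * δ / 2) * x ^ 2
          + (c / (2 * ε)) * Real.tanh ((β * ε) * x + h) ^ 2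
          + (c / (2 * δ)) * Real.tanh ((β' * δ) * x + h) ^ 2) ∂G
          = (c * ε / 2 + c * δ / 2) * 1 + (c / (2 * ε)) * q + (c / (2 * δ)) * qm := by
        have i1 : Integrable (fun x : ℝ => (c * ε / 2 + c * δ / 2) * x ^ 2) G :=
          ix2.const_mul _
        have i2 : Integrable
            (fun x : ℝ => (c / (2 * ε)) * Real.tanh ((β * ε) * x + h) ^ 2) G :=
          iTa.const_mul _
        have i3 : Integrable
            (fun x : ℝ => (c / (2 * δ)) * Real.tanh ((β' * δ) * x + h) ^ 2) G :=
          iTb.const_mul _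
        have i12 : Integrable (fun x : ℝ => (c * ε / 2 + c * δ / 2) * x ^ 2
            + (c / (2 * ε)) * Real.tanh ((β * ε) * x + h) ^ 2) G := i1.add i2
        rw [integral_add i12 i3, integral_add i1 i2,
          integral_const_mul, integral_const_mul, integral_const_mul,
          FPS.integral_sq_gauss, ← hq', ← hqm']
      have hval : (c * ε / 2 + c * δ / 2) * 1 + (c / (2 * ε)) * q + (c / (2 * δ)) * qm
          = c * (ε + δ) := by
        rw [← hε2, ← hδ2]
        field_simp
        ring
      have hmain : |q - qm| ≤ c * (ε + δ) := by
        rw [hint, hval] at habs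
        exact habs
      have hcle : c ≤ β * |ε - δ| + (β - β') * δ := by
        calc c = |β * (ε - δ) + (β - β') * δ| := by rw [hc_def]; congr 1; ring
          _ ≤ |β * (ε - δ)| + |(β - β') * δ| := abs_add_le _ _
          _ = β * |ε - δ| + (β - β') * δ := by
              rw [abs_mul, abs_mul, abs_of_nonneg hβ0, abs_of_nonneg hΔ0, abs_of_nonneg hδ0]
      have hεδ : (0:ℝ) ≤ ε + δ := add_nonneg hε0 hδ0
      have hprod : |ε - δ| * (ε + δ) = |q - qm| := by
        have h1 : |ε - δ| * (ε + δ) = |ε - δ| * |ε + δ| := by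
          rw [abs_of_nonneg hεδ]
        rw [h1, ← abs_mul]
        congr 1
        have hfac : (ε - δ) * (ε + δ) = ε ^ 2 - δ ^ 2 := by ring
        rw [hfac, hε2, hδ2]
      have hkey : |q - qm| ≤ β * |q - qm| + 2 * (β - β') := by
        calc |q - qm| ≤ c * (ε + δ) := hmain
          _ ≤ (β * |ε - δ| + (β - β') * δ) * (ε + δ) :=
              mul_le_mul_of_nonneg_right hcle hεδ
          _ = β * (|ε - δ| * (ε + δ)) + (β - β') * (δ * (ε + δ)) := by ring
          _ ≤ β * |q - qm| + (β - β') * 2 := by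
              apply add_le_add
              · exact mul_le_mul_of_nonneg_left (le_of_eq hprod) hβ0
              · apply mul_le_mul_of_nonneg_left ?_ hΔ0
                calc δ * (ε + δ) ≤ 1 * 2 :=
                      mul_le_mul hδ1 (by linarith) hεδ (by norm_num)
                  _ = 2 := by norm_num
          _ = β * |q - qm| + 2 * (β - β') := by ring
      have hhalf : (0:ℝ) ≤ (1/2 - β) * |q - qm| :=
        mul_nonneg (by linarith) (abs_nonneg _)
      have h2N : 2 * (β - β') ≤ 1 / N := by
        have := hΔ
        rw [show (1:ℝ) / (2 * N) = (1 / N) / 2 by ring] at this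
        linarith
      have hhalf' : β * |q - qm| ≤ (1/2) * |q - qm| :=
        mul_le_mul_of_nonneg_right hβ.le (abs_nonneg _)
      rw [show (2:ℝ) / N = 2 * (1 / N) by ring]
      linarith [hkey, hhalf', h2N]
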